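/- arXiv:2306.08465 — 3 statements merged into one kernel-verified Lean document; each statement's English description precedes it below -/
import Mathlib

section
/- Fix an integer n ≥ 2, a complex number s, positive reals γ₁,…,γₙ and nonzero complex numbers γ̂₁,…,γ̂ₙ, and complex numbers u₀,…,uₙ satisfying, for all j = 1,…,n−1, the second-order finite-difference relation (u_{j+1} − u_j)/γ_{j+1} − (u_j − u_{j−1})/γ_j = s²·γ̂_{j+1}·u_j. Define grid points x₀ = 0 and x_i = γ₁ + ⋯ + γ_i for i = 1,…,n. Then for every interior index i ∈ {1,…,n−1} and every continuously differentiable function φ : ℝ → ℂ that vanishes outside a compact subset of the open interval (x_{i−1}, x_{i+1}), one has ∫_{x_{i−1}}^{x_i} ((u_i − u_{i−1})/γ_i)·φ'(x) dx + ∫_{x_i}^{x_{i+1}} ((u_{i+1} − u_i)/γ_{i+1})·φ'(x) dx = −s²·γ̂_{i+1}·u_i·φ(x_i). -/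
open intervalIntegral Set

theorem integral_const_mul_deriv_add_integral_const_mul_deriv {φ : ℝ → ℂ} (hφ : ContDiff ℝ 1 φ)
    {a b c : ℝ} (hsupp : tsupport φ ⊆ Ioo a c) (p q : ℂ) :
    (∫ t in a..b, p * deriv φ t) + (∫ t in b..c, q * deriv φ t) = (p - q) * φ b := by
  have hdiff : Differentiable ℝ φ := hφ.differentiable one_ne_zero
  have hint (a b : ℝ) : IntervalIntegrable (deriv φ) MeasureTheory.volume a b :=
    (hφ.continuous_deriv le_rfl).intervalIntegrable a b
  have hφa : φ a = 0 := image_eq_zero_of_notMem_tsupport fun h => lt_irrefl a (hsupp h).1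
  have hφc : φ c = 0 := image_eq_zero_of_notMem_tsupport fun h => lt_irrefl c (hsupp h).2
  rw [integral_const_mul, integral_const_mul,
    integral_deriv_eq_sub (fun t _ => hdiff t) (hint a b),
    integral_deriv_eq_sub (fun t _ => hdiff t) (hint b c), hφa, hφc]
  ring

theorem stmt1_general (n : ℕ) (s : ℂ)
    (γ : ℕ → ℝ)
    (γhat : ℕ → ℂ)
    (u : ℕ → ℂ)
    (hu : ∀ j, 1 ≤ j → j ≤ n - 1 →
      (u (j + 1) - u j) / (γ (j + 1) : ℂ) - (u j - u (j - 1)) / (γ j : ℂ)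
        = s ^ 2 * γhat (j + 1) * u j)
    (x : ℕ → ℝ) :
    ∀ i, 1 ≤ i → i ≤ n - 1 → ∀ φ : ℝ → ℂ, ContDiff ℝ 1 φ →
      HasCompactSupport φ → tsupport φ ⊆ Set.Ioo (x (i - 1)) (x (i + 1)) →
      (∫ t in (x (i - 1))..(x i), ((u i - u (i - 1)) / (γ i : ℂ)) * deriv φ t) +
        (∫ t in (x i)..(x (i + 1)), ((u (i + 1) - u i) / (γ (i + 1) : ℂ)) * deriv φ t)
          = -(s ^ 2) * γhat (i + 1) * u i * φ (x i) := by
  intro i hi1 hi2 φ hφ _ hsupp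
  rw [integral_const_mul_deriv_add_integral_const_mul_deriv hφ hsupp]
  linear_combination (-φ (x i)) * hu i hi1 hi2

/-- Proposition 1 (Kac–Krein) in weak form: the piecewise linear interpolant of
the finite-difference solution is a weak solution of `u'' - s² Mₙ u = 0` with the
discrete mass function `Mₙ(x) = Σ γ̂_{i+1} δ(x - x_i)`. -/
theorem stmt1 (n : ℕ) (hn : 2 ≤ n) (s : ℂ)
    (γ : ℕ → ℝ) (hγ : ∀ j, 1 ≤ j → j ≤ n → 0 < γ j)
    (γhat : ℕ → ℂ) (hγhat : ∀ j, 1 ≤ j → j ≤ n → γhat j ≠ 0)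
    (u : ℕ → ℂ)
    (hu : ∀ j, 1 ≤ j → j ≤ n - 1 →
      (u (j + 1) - u j) / (γ (j + 1) : ℂ) - (u j - u (j - 1)) / (γ j : ℂ)
        = s ^ 2 * γhat (j + 1) * u j)
    (x : ℕ → ℝ) (hx : ∀ i, x i = ∑ k ∈ Finset.Icc 1 i, γ k) :
    ∀ i, 1 ≤ i → i ≤ n - 1 → ∀ φ : ℝ → ℂ, ContDiff ℝ 1 φ →
      HasCompactSupport φ → tsupport φ ⊆ Set.Ioo (x (i - 1)) (x (i + 1)) →
      (∫ t in (x (i - 1))..(x i), ((u i - u (i - 1)) / (γ i : ℂ)) * deriv φ t) +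
        (∫ t in (x i)..(x (i + 1)), ((u (i + 1) - u i) / (γ (i + 1) : ℂ)) * deriv φ t)
          = -(s ^ 2) * γhat (i + 1) * u i * φ (x i) :=
  stmt1_general n s γ γhat u hu x
end

section
/- Let μ be a finite nonnegative Borel measure on ℝ whose support is contained in (−∞, 0], and define h(s) = s·∫ (s² − z)⁻¹ dμ(z) for s in the open right half-plane. Then for every s ∈ ℂ with Re(s) > 0, Re(h(s)) ≥ 0; moreover, if μ is not the zero measure then Re(h(s)) > 0. (The key pointwise fact is that for every real a ≥ 0 and every s with Re(s) > 0, Re(s/(s² + a)) > 0.) -/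
open MeasureTheory

/-!
Pointwise, `s / (s² + a) = (s + a / s)⁻¹` and `Re (a / s) ≥ 0`, so the integrand `s (s² - z)⁻¹`
has positive real part for every `z ≤ 0`, and so does its integral against `μ ≠ 0`.
-/

namespace Complex

lemma re_div_sq_add_ofReal_pos {s : ℂ} (hs : 0 < s.re) {a : ℝ} (ha : 0 ≤ a) :
    0 < (s / (s ^ 2 + a)).re := by
  have hs0 : s ≠ 0 := fun h ↦ by simp [h] at hs
  have hsum : 0 < (s + a / s).re := by
    rw [add_re, div_eq_mul_inv, re_ofReal_mul, inv_re]
    exact add_pos_of_pos_of_nonneg hs (mul_nonneg ha (div_nonneg hs.le (normSq_nonneg s)))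
  have hsum0 : s + a / s ≠ 0 := fun h ↦ by simp [h] at hsum
  have hinv : s / (s ^ 2 + a) = (s + a / s)⁻¹ := by
    rw [show s + a / s = (s ^ 2 + a) / s by field_simp, inv_div]
  rw [hinv, inv_re]
  exact div_pos hsum (normSq_pos.2 hsum0)

lemma re_sq_le_norm_sq_sub_ofReal {s : ℂ} (hs : 0 ≤ s.re) {z : ℝ} (hz : z ≤ 0) :
    s.re ^ 2 ≤ ‖s ^ 2 - z‖ := by
  -- both factors of `s² - z = (s - i√-z)(s + i√-z)` have real part `Re s`
  set w := I * Real.sqrt (-z)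
  have hfac : s ^ 2 - z = (s - w) * (s + w) := by
    have : w ^ 2 = z := by
      simp only [w, mul_pow, I_sq, ← ofReal_pow, Real.sq_sqrt (neg_nonneg.2 hz)]
      push_cast; ring
    rw [← this]; ring
  have hre : ∀ v : ℂ, v.re = s.re → s.re ≤ ‖v‖ := fun v hv ↦ hv ▸ re_le_norm v
  rw [hfac, norm_mul, sq]
  exact mul_le_mul (hre _ (by simp [w])) (hre _ (by simp [w])) hs (norm_nonneg _)

end Complex

section

variable {α : Type*} [MeasurableSpace α] {μ : Measure α} {f : α → ℂ}

lemma re_integral_nonneg_of_ae (hf : Integrable f μ) (hnn : ∀ᵐ x ∂μ, 0 ≤ (f x).re) :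
    0 ≤ (∫ x, f x ∂μ).re := by
  rw [← show ∫ x, (f x).re ∂μ = (∫ x, f x ∂μ).re from integral_re hf]
  exact integral_nonneg_of_ae hnn

lemma re_integral_pos_of_ae (hf : Integrable f μ) (hpos : ∀ᵐ x ∂μ, 0 < (f x).re) (hμ : μ ≠ 0) :
    0 < (∫ x, f x ∂μ).re := by
  rw [← show ∫ x, (f x).re ∂μ = (∫ x, f x ∂μ).re from integral_re hf,
    integral_pos_iff_support_of_nonneg_ae (hpos.mono fun _ ↦ le_of_lt) hf.re, pos_iff_ne_zero]
  intro h
  have : ∀ᵐ x ∂μ, False := by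
    filter_upwards [measure_eq_zero_iff_ae_notMem.1 h, hpos] with x hx hx'
    exact hx hx'.ne'
  exact hμ (ae_eq_bot.1 (Filter.eventually_false_iff_eq_bot.1 this))

end

lemma integrable_inv_sq_sub_ofReal {μ : Measure ℝ} [IsFiniteMeasure μ] (hμ : ∀ᵐ z ∂μ, z ≤ 0)
    {s : ℂ} (hs : 0 < s.re) : Integrable (fun z : ℝ ↦ (s ^ 2 - z)⁻¹) μ := by
  refine (integrable_const (s.re ^ 2)⁻¹).mono' (by fun_prop) ?_
  filter_upwards [hμ] with z hz
  rw [norm_inv]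
  exact inv_anti₀ (by positivity) (Complex.re_sq_le_norm_sq_sub_ofReal hs.le hz)

/-- Passivity of `h(s) = s ∫ (s² - z)⁻¹ dμ(z)` for a finite nonnegative measure
`μ` supported on `(-∞, 0]`: `Re h(s) ≥ 0` on the open right half-plane, with
strict inequality when `μ ≠ 0`.  The key pointwise fact is that
`Re (s / (s² + a)) > 0` for every real `a ≥ 0` and every `s` with `Re s > 0`. -/
theorem stmt12 (μ : Measure ℝ) [IsFiniteMeasure μ]
    (hsupp : μ (Set.Ioi 0) = 0)
    (h : ℂ → ℂ)
    (hh : ∀ s : ℂ, h s = s * ∫ z, (s ^ 2 - (z : ℂ))⁻¹ ∂μ) :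
    (∀ s : ℂ, 0 < s.re → 0 ≤ (h s).re ∧ (μ ≠ 0 → 0 < (h s).re)) ∧
      (∀ a : ℝ, 0 ≤ a → ∀ s : ℂ, 0 < s.re →
        0 < (s / (s ^ 2 + (a : ℂ))).re) := by
  have hneg : ∀ᵐ z ∂μ, z ≤ 0 := by
    filter_upwards [measure_eq_zero_iff_ae_notMem.1 hsupp] with z hz
    exact not_lt.1 hz
  refine ⟨fun s hs ↦ ?_, fun a ha s hs ↦ Complex.re_div_sq_add_ofReal_pos hs ha⟩
  have hint := (integrable_inv_sq_sub_ofReal hneg hs).const_mul s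
  have hpos : ∀ᵐ z : ℝ ∂μ, 0 < (s * (s ^ 2 - z)⁻¹).re := by
    filter_upwards [hneg] with z hz
    simpa [div_eq_mul_inv, sub_eq_add_neg] using
      Complex.re_div_sq_add_ofReal_pos hs (neg_nonneg.2 hz)
  rw [hh, ← integral_const_mul]
  exact ⟨re_integral_nonneg_of_ae hint (hpos.mono fun _ ↦ le_of_lt),
    re_integral_pos_of_ae hint hpos⟩
end

section
/- Let ρ : ℝ → ℝ be a nonnegative Lebesgue-integrable function vanishing on (0, ∞), define f(λ) = ∫_{−∞}^{0} ρ(z)/(λ − z) dz for λ ∈ ℂ ∖ (−∞, 0], and set h(s) = s·f(s²). Let ω be a nonzero real number such that ρ is continuous at the point −ω². Then lim_{ε → 0⁺} Re( h(ε + iω) ) = π·|ω|·ρ(−ω²). In particular, whenever ρ(−ω²) > 0 this boundary limit of the real part of h is strictly positive. -/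
/-!
Writing `s = ε + iω`, the real part of `h(s)` is `∫_{z ≤ 0} ρ(z) K_ε(z) dz` with the explicit
kernel `K_ε(z) = Re (s / (s² - z))`. On `z ≤ 0` this kernel is nonnegative, it tends to `0`
uniformly away from `z = -ω²` as `ε → 0⁺`, and its mass near `-ω²` tends to `π |ω|` (the
primitive contains `|ω| arctan((ε² - ω² - z) / (2ε|ω|))`, whose jump across `-ω²` becomes
`π |ω|`). So `K_ε` is an approximate identity at `-ω²` of mass `π |ω|`, which gives the
limit `π |ω| ρ(-ω²)` by continuity of `ρ` there.
-/

open MeasureTheory Filter Topology Metric Set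

lemma tendsto_of_forall_eventually_dist_le {ι β : Type*} [PseudoMetricSpace β] {l : Filter ι}
    {F : ι → β} {L : β} {C : ℝ} (h : ∀ δ > 0, ∀ᶠ i in l, dist (F i) L ≤ C * δ) :
    Tendsto F l (𝓝 L) := by
  refine Metric.tendsto_nhds.2 fun ε hε => ?_
  have hC : 0 < |C| + 1 := by positivity
  filter_upwards [h (ε / (|C| + 1)) (by positivity)] with i hi
  calc dist (F i) L ≤ C * (ε / (|C| + 1)) := hi
    _ ≤ |C| * (ε / (|C| + 1)) := by gcongr; exact le_abs_self C
    _ < ε := by rw [mul_div_assoc', div_lt_iff₀ hC]; nlinarith [abs_nonneg C]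

section ApproxIdentity

variable {α : Type*} [MeasurableSpace α] {μ : Measure α}

lemma abs_setIntegral_mul_sub_le {g K : α → ℝ} {s : Set α} {a δ : ℝ} (hs : MeasurableSet s)
    (hgK : IntegrableOn (fun x => g x * K x) s μ) (hK : IntegrableOn K s μ)
    (hK0 : ∀ᵐ x ∂μ.restrict s, 0 ≤ K x) (hg : ∀ x ∈ s, |g x - a| ≤ δ) :
    |∫ x in s, g x * K x ∂μ - a * ∫ x in s, K x ∂μ| ≤ δ * ∫ x in s, K x ∂μ := by
  have hsub : ∫ x in s, g x * K x ∂μ - a * ∫ x in s, K x ∂μ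
      = ∫ x in s, (g x - a) * K x ∂μ := by
    rw [← integral_const_mul, ← integral_sub hgK (hK.const_mul a)]
    simp only [sub_mul]
  rw [hsub, ← integral_const_mul, ← Real.norm_eq_abs]
  refine norm_integral_le_of_norm_le (hK.const_mul δ) ?_
  filter_upwards [hK0, ae_restrict_mem hs] with x hKx hx
  rw [Real.norm_eq_abs, abs_mul, abs_of_nonneg hKx]
  exact mul_le_mul_of_nonneg_right (hg x hx) hKx

lemma abs_setIntegral_mul_le {g K : α → ℝ} {s : Set α} {δ : ℝ} (hδ : 0 ≤ δ)
    (hg : Integrable g μ) (hK : ∀ᵐ x ∂μ.restrict s, 0 ≤ K x ∧ K x ≤ δ) :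
    |∫ x in s, g x * K x ∂μ| ≤ δ * ∫ x, |g x| ∂μ := by
  calc |∫ x in s, g x * K x ∂μ| ≤ ∫ x in s, δ * |g x| ∂μ := by
        rw [← Real.norm_eq_abs]
        refine norm_integral_le_of_norm_le (hg.norm.const_mul δ).restrict ?_
        filter_upwards [hK] with x ⟨hK0, hKδ⟩
        rw [Real.norm_eq_abs, abs_mul, abs_of_nonneg hK0, mul_comm δ]
        exact mul_le_mul_of_nonneg_left hKδ (abs_nonneg _)
    _ ≤ ∫ x, δ * |g x| ∂μ :=
        setIntegral_le_integral (hg.norm.const_mul δ) (ae_of_all _ fun x => by positivity)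
    _ = δ * ∫ x, |g x| ∂μ := integral_const_mul δ _

theorem tendsto_integral_mul_of_approxIdentity {ι : Type*} {l : Filter ι} [PseudoMetricSpace α]
    [OpensMeasurableSpace α] {K : ι → α → ℝ} {g : α → ℝ} {x₀ : α} {c r : ℝ}
    (hg : Integrable g μ) (hgx₀ : ContinuousAt g x₀) (hr : 0 < r)
    (hKint : ∀ᶠ i in l, Integrable (fun x => g x * K i x) μ ∧ IntegrableOn (K i) (ball x₀ r) μ)
    (hK0 : ∀ᶠ i in l, 0 ≤ᵐ[μ] K i)
    (hmass : ∀ η ∈ Ioo 0 r, Tendsto (fun i => ∫ x in ball x₀ η, K i x ∂μ) l (𝓝 c))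
    (hfar : ∀ η > 0, ∀ δ > 0, ∀ᶠ i in l, ∀ᵐ x ∂μ, η ≤ dist x x₀ → K i x ≤ δ) :
    Tendsto (fun i => ∫ x, g x * K i x ∂μ) l (𝓝 (c * g x₀)) := by
  refine tendsto_of_forall_eventually_dist_le
    (C := |c| + 1 + |g x₀| + ∫ x, |g x| ∂μ) fun δ hδ => ?_
  obtain ⟨η₀, hη₀, hgη₀⟩ := Metric.continuousAt_iff.1 hgx₀ δ hδ
  set η := min η₀ (r / 2)
  have hη : η ∈ Ioo 0 r := ⟨by positivity, (min_le_right _ _).trans_lt (by linarith)⟩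
  have hgη : ∀ x ∈ ball x₀ η, |g x - g x₀| ≤ δ := fun x hx =>
    (hgη₀ (hx.trans_le (min_le_left _ _))).le
  have hmassη := Metric.tendsto_nhds.1 (hmass η hη)
  filter_upwards [hKint, hK0, hfar η hη.1 δ hδ, hmassη δ hδ, hmassη 1 one_pos]
    with i ⟨hgK, hKr⟩ hK0i hfari hmassδ hmass1
  rw [Real.dist_eq] at hmassδ hmass1
  set B := ball x₀ η
  have hnear := abs_setIntegral_mul_sub_le measurableSet_ball hgK.integrableOn
    (hKr.mono_set (ball_subset_ball hη.2.le)) (ae_restrict_of_ae hK0i) hgη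
  have hfarB : |∫ x in Bᶜ, g x * K i x ∂μ| ≤ δ * ∫ x, |g x| ∂μ := by
    refine abs_setIntegral_mul_le hδ.le hg ?_
    filter_upwards [ae_restrict_of_ae hK0i, ae_restrict_of_ae hfari,
      ae_restrict_mem measurableSet_ball.compl] with x hx0 hxδ hxB
    exact ⟨hx0, hxδ (not_lt.1 hxB)⟩
  have hmassB : ∫ x in B, K i x ∂μ ≤ |c| + 1 := by
    linarith [(abs_lt.1 hmass1).2, le_abs_self c]
  rw [Real.dist_eq, ← integral_add_compl measurableSet_ball hgK]
  calc |∫ x in B, g x * K i x ∂μ + ∫ x in Bᶜ, g x * K i x ∂μ - c * g x₀|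
      = |(∫ x in B, g x * K i x ∂μ - g x₀ * ∫ x in B, K i x ∂μ)
          + g x₀ * (∫ x in B, K i x ∂μ - c) + ∫ x in Bᶜ, g x * K i x ∂μ| := by ring_nf
    _ ≤ |∫ x in B, g x * K i x ∂μ - g x₀ * ∫ x in B, K i x ∂μ|
          + |g x₀| * |∫ x in B, K i x ∂μ - c| + |∫ x in Bᶜ, g x * K i x ∂μ| := by
        rw [← abs_mul]; exact abs_add_three _ _ _
    _ ≤ δ * (|c| + 1) + |g x₀| * δ + δ * ∫ x, |g x| ∂μ := by
        gcongr
        exact hnear.trans (by gcongr)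
    _ = (|c| + 1 + |g x₀| + ∫ x, |g x| ∂μ) * δ := by ring

end ApproxIdentity

section CauchyTransform

variable {μ : Measure ℝ} {g : ℝ → ℝ} {w : ℂ}

lemma integrable_ofReal_div_sub (hg : Integrable g μ) (hw : w.im ≠ 0) :
    Integrable (fun z : ℝ => (g z : ℂ) / (w - z)) μ := by
  have hne : ∀ z : ℝ, w - z ≠ 0 := fun z hz => hw (by simpa using congrArg Complex.im hz)
  refine hg.ofReal.mul_bdd (c := |w.im|⁻¹)
    ((continuous_const.sub Complex.continuous_ofReal).inv₀ hne).aestronglyMeasurable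
    (ae_of_all _ fun z => ?_)
  rw [norm_inv]
  refine inv_anti₀ (abs_pos.2 hw) ?_
  simpa using Complex.abs_im_le_norm (w - z)

lemma integrable_mul_re_div_sub (hg : Integrable g μ) (hw : w.im ≠ 0) (s : ℂ) :
    Integrable (fun z => g z * (s / (w - z)).re) μ := by
  refine ((integrable_ofReal_div_sub hg hw).const_mul s).re.congr (ae_of_all _ fun z => ?_)
  simp only [RCLike.re_to_complex]
  rw [mul_div_left_comm, Complex.re_ofReal_mul]

lemma re_mul_integral_ofReal_div_sub (hg : Integrable g μ) (hw : w.im ≠ 0) (s : ℂ) :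
    (s * ∫ z, (g z : ℂ) / (w - z) ∂μ).re = ∫ z, g z * (s / (w - z)).re ∂μ := by
  rw [← integral_const_mul, ← Complex.reCLM_apply, ← ContinuousLinearMap.integral_comp_comm _
    ((integrable_ofReal_div_sub hg hw).const_mul s)]
  congr 1 with z
  rw [Complex.reCLM_apply, mul_div_left_comm, Complex.re_ofReal_mul]

end CauchyTransform

section BoundaryKernel

noncomputable def boundaryKernel (ω ε z : ℝ) : ℝ :=
  ε * (ε ^ 2 + ω ^ 2 - z) / ((ε ^ 2 - ω ^ 2 - z) ^ 2 + 4 * ε ^ 2 * ω ^ 2)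

noncomputable def boundaryKernelPrimitive (ω ε z : ℝ) : ℝ :=
  -(ε / 2) * Real.log ((ε ^ 2 - ω ^ 2 - z) ^ 2 + 4 * ε ^ 2 * ω ^ 2)
    - |ω| * Real.arctan ((ε ^ 2 - ω ^ 2 - z) / (2 * ε * |ω|))

variable {ω ε : ℝ}

lemma im_sq_ofReal_add_ofReal_mul_I (ε ω : ℝ) :
    (((ε : ℂ) + ω * Complex.I) ^ 2).im = 2 * ε * ω := by
  simp [sq]
  ring

lemma re_div_sq_sub_eq_boundaryKernel (ω ε z : ℝ) :
    (((ε : ℂ) + ω * Complex.I) / (((ε : ℂ) + ω * Complex.I) ^ 2 - z)).re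
      = boundaryKernel ω ε z := by
  rw [Complex.div_re, Complex.normSq_apply, boundaryKernel]
  simp only [sq, Complex.add_re, Complex.add_im, Complex.mul_re, Complex.mul_im,
    Complex.sub_re, Complex.sub_im, Complex.ofReal_re, Complex.ofReal_im,
    Complex.I_re, Complex.I_im]
  ring_nf

lemma boundaryKernel_denom_pos (hω : ω ≠ 0) (hε : 0 < ε) (z : ℝ) :
    0 < (ε ^ 2 - ω ^ 2 - z) ^ 2 + 4 * ε ^ 2 * ω ^ 2 := by
  positivity

lemma boundaryKernel_nonneg (hε : 0 ≤ ε) {z : ℝ} (hz : z ≤ 0) : 0 ≤ boundaryKernel ω ε z := by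
  have : 0 ≤ ε ^ 2 + ω ^ 2 - z := by nlinarith [sq_nonneg ε, sq_nonneg ω]
  unfold boundaryKernel
  positivity

lemma continuous_boundaryKernel (hω : ω ≠ 0) (hε : 0 < ε) : Continuous (boundaryKernel ω ε) :=
  Continuous.div (by fun_prop) (by fun_prop) fun z => (boundaryKernel_denom_pos hω hε z).ne'

lemma boundaryKernel_le_of_le_abs {η z : ℝ} (hε : 0 < ε) (hη : 0 < η) (hεη : ε ^ 2 ≤ η / 2)
    (hz : η ≤ |z + ω ^ 2|) :
    boundaryKernel ω ε z ≤ ε * (4 * (3 * η / 2 + 2 * ω ^ 2) / η ^ 2) := by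
  set t := z + ω ^ 2
  have hu : |t| / 2 ≤ |ε ^ 2 - ω ^ 2 - z| := by
    have := abs_sub_abs_le_abs_sub t (ε ^ 2)
    rw [abs_sub_comm, abs_of_nonneg (sq_nonneg ε)] at this
    rw [show ε ^ 2 - ω ^ 2 - z = ε ^ 2 - t by ring]
    linarith
  have hD : t ^ 2 / 4 ≤ (ε ^ 2 - ω ^ 2 - z) ^ 2 + 4 * ε ^ 2 * ω ^ 2 := by
    have := mul_le_mul hu hu (by positivity) (abs_nonneg _)
    rw [← sq_abs t]
    nlinarith [sq_abs (ε ^ 2 - ω ^ 2 - z), sq_nonneg (ε * ω)]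
  have hN : ε ^ 2 + ω ^ 2 - z ≤ η / 2 + 2 * ω ^ 2 + |t| := by
    linarith [neg_abs_le t]
  have hC : η / 2 + 2 * ω ^ 2 + |t| ≤ 4 * (3 * η / 2 + 2 * ω ^ 2) / η ^ 2 * (t ^ 2 / 4) := by
    rw [← sq_abs t, show 4 * (3 * η / 2 + 2 * ω ^ 2) / η ^ 2 * (|t| ^ 2 / 4)
      = (η / 2 + 2 * ω ^ 2) * (|t| / η) ^ 2 + |t| * (|t| / η) by field_simp; ring]
    have h1 : 1 ≤ |t| / η := (one_le_div hη).2 hz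
    have h2 : 1 ≤ (|t| / η) ^ 2 := one_le_pow₀ h1
    nlinarith [abs_nonneg t, sq_nonneg ω]
  have hDpos : 0 < (ε ^ 2 - ω ^ 2 - z) ^ 2 + 4 * ε ^ 2 * ω ^ 2 :=
    lt_of_lt_of_le (by rw [← sq_abs]; exact div_pos (pow_pos (hη.trans_le hz) 2) four_pos) hD
  rw [boundaryKernel, div_le_iff₀ hDpos, mul_assoc]
  gcongr
  exact hN.trans (hC.trans (by gcongr))

lemma eventually_boundaryKernel_le {η δ : ℝ} (hη : 0 < η) (hδ : 0 < δ) :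
    ∀ᶠ ε in 𝓝[>] 0, ∀ z, η ≤ dist z (-ω ^ 2) → boundaryKernel ω ε z ≤ δ := by
  set C := 4 * (3 * η / 2 + 2 * ω ^ 2) / η ^ 2
  have hsq : Tendsto (fun ε : ℝ => ε ^ 2) (𝓝[>] 0) (𝓝 0) :=
    tendsto_nhdsWithin_of_tendsto_nhds ((continuous_pow 2).tendsto' 0 0 (by simp))
  have hlin : Tendsto (fun ε : ℝ => ε * C) (𝓝[>] 0) (𝓝 0) :=
    tendsto_nhdsWithin_of_tendsto_nhds ((continuous_mul_const C).tendsto' 0 0 (by simp))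
  filter_upwards [self_mem_nhdsWithin, hsq.eventually_le_const (half_pos hη),
    hlin.eventually_le_const hδ] with ε (hε : 0 < ε) hεη hεδ z hz
  rw [Real.dist_eq, sub_neg_eq_add] at hz
  exact (boundaryKernel_le_of_le_abs hε hη hεη hz).trans hεδ

lemma hasDerivAt_boundaryKernelPrimitive (hω : ω ≠ 0) (hε : 0 < ε) (z : ℝ) :
    HasDerivAt (boundaryKernelPrimitive ω ε) (boundaryKernel ω ε z) z := by
  have hu : HasDerivAt (fun z : ℝ => ε ^ 2 - ω ^ 2 - z) (-1) z := by
    simpa using (hasDerivAt_id z).const_sub (ε ^ 2 - ω ^ 2)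
  have hlog := ((hu.pow 2).add_const (4 * ε ^ 2 * ω ^ 2)).log
    (boundaryKernel_denom_pos hω hε z).ne'
  have harctan := (hu.div_const (2 * ε * |ω|)).arctan
  refine ((hlog.const_mul (-(ε / 2))).sub (harctan.const_mul |ω|)).congr_deriv ?_
  simp only [Pi.pow_apply, boundaryKernel]
  rw [← sq_abs ω]
  have : 0 < |ω| := abs_pos.2 hω
  have : 0 < (ε ^ 2 - |ω| ^ 2 - z) ^ 2 + 4 * ε ^ 2 * |ω| ^ 2 := by positivity
  field_simp
  ring

lemma tendsto_sq_add_div_atTop {a c : ℝ} (ha : 0 < a) (hc : 0 < c) :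
    Tendsto (fun ε : ℝ => (ε ^ 2 + c) / (2 * ε * a)) (𝓝[>] 0) atTop := by
  have hlin : Tendsto (fun ε : ℝ => ε / (2 * a)) (𝓝[>] 0) (𝓝 0) :=
    tendsto_nhdsWithin_of_tendsto_nhds ((continuous_id.div_const _).tendsto' 0 0 (by simp))
  refine (hlin.add_atTop (tendsto_inv_nhdsGT_zero.const_mul_atTop
    (by positivity : 0 < c / (2 * a)))).congr' ?_
  filter_upwards [self_mem_nhdsWithin] with ε (hε : 0 < ε)
  field_simp

lemma tendsto_sq_sub_div_atBot {a c : ℝ} (ha : 0 < a) (hc : 0 < c) :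
    Tendsto (fun ε : ℝ => (ε ^ 2 - c) / (2 * ε * a)) (𝓝[>] 0) atBot := by
  have hlin : Tendsto (fun ε : ℝ => ε / (2 * a)) (𝓝[>] 0) (𝓝 0) :=
    tendsto_nhdsWithin_of_tendsto_nhds ((continuous_id.div_const _).tendsto' 0 0 (by simp))
  refine (hlin.add_atBot (tendsto_inv_nhdsGT_zero.const_mul_atTop_of_neg
    (by simpa using (by positivity : 0 < c / (2 * a)) : -(c / (2 * a)) < 0))).congr' ?_
  filter_upwards [self_mem_nhdsWithin] with ε (hε : 0 < ε)
  field_simp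
  ring

lemma tendsto_mul_log_nhdsGT_zero {c : ℝ} (hc : c ≠ 0) :
    Tendsto (fun ε : ℝ => -(ε / 2) * Real.log ((ε ^ 2 - c) ^ 2 + 4 * ε ^ 2 * ω ^ 2))
      (𝓝[>] 0) (𝓝 0) := by
  have hcont : ContinuousAt
      (fun ε : ℝ => -(ε / 2) * Real.log ((ε ^ 2 - c) ^ 2 + 4 * ε ^ 2 * ω ^ 2)) 0 :=
    (continuousAt_id.div_const 2).neg.mul (ContinuousAt.log (by fun_prop) (by simpa using hc))
  simpa using tendsto_nhdsWithin_of_tendsto_nhds hcont.tendsto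

lemma tendsto_intervalIntegral_boundaryKernel (hω : ω ≠ 0) {η : ℝ} (hη : 0 < η) :
    Tendsto (fun ε => ∫ z in (-ω ^ 2 - η)..(-ω ^ 2 + η), boundaryKernel ω ε z)
      (𝓝[>] 0) (𝓝 (Real.pi * |ω|)) := by
  have hω' : 0 < |ω| := abs_pos.2 hω
  have hFTC : ∀ᶠ ε in 𝓝[>] (0 : ℝ),
      boundaryKernelPrimitive ω ε (-ω ^ 2 + η) - boundaryKernelPrimitive ω ε (-ω ^ 2 - η)
        = ∫ z in (-ω ^ 2 - η)..(-ω ^ 2 + η), boundaryKernel ω ε z := by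
    filter_upwards [self_mem_nhdsWithin] with ε (hε : 0 < ε)
    exact (intervalIntegral.integral_eq_sub_of_hasDerivAt
      (fun z _ => hasDerivAt_boundaryKernelPrimitive hω hε z)
      ((continuous_boundaryKernel hω hε).intervalIntegrable _ _)).symm
  refine Tendsto.congr' hFTC ?_
  have hupper := (tendsto_mul_log_nhdsGT_zero (ω := ω) hη.ne').sub
    (((Real.tendsto_arctan_atBot.mono_right nhdsWithin_le_nhds).comp
      (tendsto_sq_sub_div_atBot hω' hη)).const_mul |ω|)
  have hlower := (tendsto_mul_log_nhdsGT_zero (ω := ω) (neg_ne_zero.2 hη.ne')).sub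
    (((Real.tendsto_arctan_atTop.mono_right nhdsWithin_le_nhds).comp
      (tendsto_sq_add_div_atTop hω' hη)).const_mul |ω|)
  convert hupper.sub hlower using 2 with ε
  · simp only [boundaryKernelPrimitive, Function.comp_def]
    ring_nf
  · ring

lemma tendsto_setIntegral_ball_boundaryKernel (hω : ω ≠ 0) {η : ℝ} (hη : η ∈ Ioo 0 (ω ^ 2)) :
    Tendsto (fun ε => ∫ z in ball (-ω ^ 2) η, boundaryKernel ω ε z ∂volume.restrict (Iic 0))
      (𝓝[>] 0) (𝓝 (Real.pi * |ω|)) := by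
  have hball : ball (-ω ^ 2) η ⊆ Iic 0 := fun z hz => by
    rw [Real.ball_eq_Ioo] at hz
    exact (hz.2.trans (by linarith [hη.2])).le
  simp_rw [Measure.restrict_restrict measurableSet_ball, inter_eq_left.2 hball,
    Real.ball_eq_Ioo, ← integral_Ioc_eq_integral_Ioo,
    ← intervalIntegral.integral_of_le (by linarith [hη.1] : -ω ^ 2 - η ≤ -ω ^ 2 + η)]
  exact tendsto_intervalIntegral_boundaryKernel hω hη.1

end BoundaryKernel

theorem stmt14_general (ρ : ℝ → ℝ) (hρint : Integrable ρ)
    (f : ℂ → ℂ)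
    (hf : ∀ l : ℂ, f l = ∫ z in Set.Iic (0 : ℝ), (ρ z : ℂ) / (l - (z : ℂ)))
    (h : ℂ → ℂ) (hh : ∀ s : ℂ, h s = s * f (s ^ 2))
    (ω : ℝ) (hω : ω ≠ 0) (hcont : ContinuousAt ρ (-ω ^ 2)) :
    Tendsto (fun ε : ℝ => (h ((ε : ℂ) + (ω : ℂ) * Complex.I)).re)
        (nhdsWithin 0 (Set.Ioi 0))
        (nhds (Real.pi * |ω| * ρ (-ω ^ 2))) ∧
      (0 < ρ (-ω ^ 2) → 0 < Real.pi * |ω| * ρ (-ω ^ 2)) := by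
  refine ⟨?_, fun hρω => by positivity⟩
  have him : ∀ ε : ℝ, 0 < ε → (((ε : ℂ) + ω * Complex.I) ^ 2).im ≠ 0 := fun ε hε => by
    rw [im_sq_ofReal_add_ofReal_mul_I]
    exact mul_ne_zero (mul_ne_zero two_ne_zero hε.ne') hω
  have hre : ∀ᶠ ε in 𝓝[>] (0 : ℝ), ∫ z in Iic 0, ρ z * boundaryKernel ω ε z
      = (h ((ε : ℂ) + ω * Complex.I)).re := by
    filter_upwards [self_mem_nhdsWithin] with ε (hε : 0 < ε)
    simp_rw [hh, hf, re_mul_integral_ofReal_div_sub hρint.restrict (him ε hε),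
      re_div_sq_sub_eq_boundaryKernel]
  refine (tendsto_integral_mul_of_approxIdentity hρint.restrict hcont (by positivity) ?_ ?_
    (fun η hη => tendsto_setIntegral_ball_boundaryKernel hω hη) ?_).congr' hre
  · filter_upwards [self_mem_nhdsWithin] with ε (hε : 0 < ε)
    refine ⟨?_, ?_⟩
    · simpa only [re_div_sq_sub_eq_boundaryKernel] using
        integrable_mul_re_div_sub hρint.restrict (him ε hε) ((ε : ℂ) + ω * Complex.I)
    · exact ((continuous_boundaryKernel hω hε).integrableOn_Icc).mono_set
        (Real.ball_eq_Ioo _ _ ▸ Ioo_subset_Icc_self)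
  · filter_upwards [self_mem_nhdsWithin] with ε (hε : 0 < ε)
    exact ae_restrict_of_forall_mem measurableSet_Iic fun z hz => boundaryKernel_nonneg hε.le hz
  · intro η hη δ hδ
    filter_upwards [eventually_boundaryKernel_le hη hδ] with ε hε
    exact ae_of_all _ (hε ·)

/-- Boundary values of the transfer function: for the Stieltjes function
`f(λ) = ∫_{-∞}^0 ρ(z)/(λ - z) dz` with nonnegative integrable density `ρ`
vanishing on `(0, ∞)`, the transfer function `h(s) = s f(s²)` satisfies
`lim_{ε→0⁺} Re h(ε + iω) = π |ω| ρ(-ω²)` at every nonzero real `ω` where `ρ`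
is continuous at `-ω²`; in particular this limit is positive whenever
`ρ(-ω²) > 0`. -/
theorem stmt14 (ρ : ℝ → ℝ) (hρ0 : ∀ z, 0 ≤ ρ z) (hρint : Integrable ρ)
    (hρsupp : ∀ z > 0, ρ z = 0)
    (f : ℂ → ℂ)
    (hf : ∀ l : ℂ, f l = ∫ z in Set.Iic (0 : ℝ), (ρ z : ℂ) / (l - (z : ℂ)))
    (h : ℂ → ℂ) (hh : ∀ s : ℂ, h s = s * f (s ^ 2))
    (ω : ℝ) (hω : ω ≠ 0) (hcont : ContinuousAt ρ (-ω ^ 2)) :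
    Tendsto (fun ε : ℝ => (h ((ε : ℂ) + (ω : ℂ) * Complex.I)).re)
        (nhdsWithin 0 (Set.Ioi 0))
        (nhds (Real.pi * |ω| * ρ (-ω ^ 2))) ∧
      (0 < ρ (-ω ^ 2) → 0 < Real.pi * |ω| * ρ (-ω ^ 2)) :=
  stmt14_general ρ hρint f hf h hh ω hω hcont
end
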